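/- arXiv:0707.2119 — 2 statements merged into one kernel-verified Lean document; each statement's English description precedes it below -/
import Mathlib

section
/- For fixed l ≥ 0 and m ≥ l, ν₂(A_{l,m+1}) − ν₂(A_{l,m}) = ν₂(m+l+1) − ν₂(m−l+1). -/
/-!
Write `A l m = 2^{-(m-l)} ∑ₖ bₖ` with the natural numbers
`bₖ = l! m! 2ᵏ C(2m-2k, m-k) C(m+k, m) C(k, l)` (`A.term l m k`). Since `ν₂(C(2n, n)) = n - ν₂(n!)`, one gets
`ν₂(bₖ) = m + ν₂((m+k)!) - ν₂((m-k)!) - ν₂((k-l)!)`, so that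
`ν₂(bₖ) - ν₂(bₗ) = ν₂((m+k)! / (m+l)!) + ν₂(C(m-l, k-l))` for `l < k ≤ m`. This is positive:
for `k = l + 1` it is `ν₂((m+l+1)(m-l))`, for `k ≥ l + 2` it is at least `ν₂((m+l+1)(m+l+2))`,
and in both cases the two factors have odd sum. Hence the `k = l` term alone determines the
valuation, `ν₂(A l m) = l + ν₂((m+l)!) - ν₂((m-l)!)`, and the claim follows from
`ν₂((n+1)!) = ν₂(n+1) + ν₂(n!)`.
-/

open Finset

noncomputable def A (l m : ℕ) : ℚ :=
  ((l.factorial * m.factorial : ℕ) : ℚ) / 2 ^ (m - l) *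
    ∑ k ∈ Finset.Icc l m,
      (2 : ℚ) ^ k * ((2 * m - 2 * k).choose (m - k)) * ((m + k).choose m) * (k.choose l)

open Nat

section PadicValNat

variable {p : ℕ} [Fact p.Prime]

theorem padicValNat_factorial_succ (n : ℕ) :
    padicValNat p (n + 1)! = padicValNat p (n + 1) + padicValNat p n ! := by
  rw [factorial_succ, padicValNat.mul n.succ_ne_zero (factorial_ne_zero n)]

theorem padicValNat_factorial_mono {a b : ℕ} (h : a ≤ b) :
    padicValNat p a ! ≤ padicValNat p b ! :=
  (padicValNat_dvd_iff_le (factorial_ne_zero b)).mp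
    (pow_padicValNat_dvd.trans (factorial_dvd_factorial h))

theorem padicValNat_choose_add_factorials {n k : ℕ} (h : k ≤ n) :
    padicValNat p (n.choose k) + padicValNat p k ! + padicValNat p (n - k)! =
      padicValNat p n ! := by
  have := congrArg (padicValNat p) (choose_mul_factorial_mul_factorial h)
  rw [padicValNat.mul (mul_ne_zero (choose_pos h).ne' (factorial_ne_zero k)) (factorial_ne_zero _),
    padicValNat.mul (choose_pos h).ne' (factorial_ne_zero k)] at this
  omega

theorem padicValNat_sum_eq_of_dvd {ι : Type*} {s : Finset ι} {f : ι → ℕ} {i : ι} (hi : i ∈ s)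
    (hfi : f i ≠ 0) (hdvd : ∀ j ∈ s, j ≠ i → p ^ (padicValNat p (f i) + 1) ∣ f j) :
    padicValNat p (∑ j ∈ s, f j) = padicValNat p (f i) := by
  classical
  rw [← add_sum_erase s f hi]
  have hrest : p ^ (padicValNat p (f i) + 1) ∣ ∑ j ∈ s.erase i, f j :=
    dvd_sum fun j hj => hdvd j (mem_of_mem_erase hj) (ne_of_mem_erase hj)
  have hne : f i + ∑ j ∈ s.erase i, f j ≠ 0 := by omega
  refine le_antisymm (not_lt.mp fun hlt => pow_succ_padicValNat_not_dvd (p := p) hfi ?_) ?_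
  · exact (Nat.dvd_add_left hrest).mp ((padicValNat_dvd_iff_le hne).mpr hlt)
  · exact (padicValNat_dvd_iff_le hne).mp
      (dvd_add pow_padicValNat_dvd ((pow_dvd_pow p (le_succ _)).trans hrest))

end PadicValNat

theorem one_le_padicValNat_two_add_of_odd {a b : ℕ} (ha : a ≠ 0) (hb : b ≠ 0) (h : Odd (a + b)) :
    1 ≤ padicValNat 2 a + padicValNat 2 b := by
  obtain ⟨c, hc⟩ := h
  rcases (show 2 ∣ a ∨ 2 ∣ b by omega) with heven | heven
  · have := one_le_padicValNat_of_dvd ha heven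
    omega
  · have := one_le_padicValNat_of_dvd hb heven
    omega

theorem padicValNat_two_factorial_lt_add_choose {l m k : ℕ} (hlk : l < k) (hkm : k ≤ m) :
    padicValNat 2 (m + l)! < padicValNat 2 (m + k)! + padicValNat 2 ((m - l).choose (k - l)) := by
  have hsucc := padicValNat_factorial_succ (p := 2) (m + l)
  obtain rfl | hk := (show l + 1 ≤ k by omega).eq_or_lt
  · rw [Nat.add_sub_cancel_left, choose_one_right, ← add_assoc]
    have := one_le_padicValNat_two_add_of_odd (by omega) (by omega)
      (⟨m, by omega⟩ : Odd (m + l + 1 + (m - l)))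
    omega
  · have hmono := padicValNat_factorial_mono (p := 2) (show m + l + 1 + 1 ≤ m + k by omega)
    have hsucc' := padicValNat_factorial_succ (p := 2) (m + l + 1)
    have := one_le_padicValNat_two_add_of_odd (by omega) (by omega)
      (⟨m + l + 1, by omega⟩ : Odd (m + l + 1 + (m + l + 1 + 1)))
    omega

theorem padicValNat_centralBinom_add_factorial (n : ℕ) :
    padicValNat 2 n.centralBinom + padicValNat 2 n ! = n := by
  have := padicValNat_choose_add_factorials (p := 2) (show n ≤ 2 * n by omega)
  rw [show 2 * n - n = n by omega, padicValNat_factorial_mul] at this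
  rw [centralBinom_eq_two_mul_choose]
  omega

namespace A

def term (l m k : ℕ) : ℕ :=
  l ! * m ! * (2 ^ k * (2 * m - 2 * k).choose (m - k) * (m + k).choose m * k.choose l)

theorem eq_sum_term_div (l m : ℕ) : A l m = (∑ k ∈ Icc l m, term l m k : ℕ) / 2 ^ (m - l) := by
  rw [A, div_mul_eq_mul_div, mul_sum]
  push_cast [term]
  rfl

theorem term_pos {l m k : ℕ} (hlk : l ≤ k) (hkm : k ≤ m) : 0 < term l m k := by
  have hCkl := choose_pos hlk
  have hCmk := choose_pos (show m - k ≤ 2 * m - 2 * k by omega)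
  have hCm := choose_pos (le_add_right m k)
  unfold term
  positivity

theorem padicValNat_term {l m k : ℕ} (hlk : l ≤ k) (hkm : k ≤ m) :
    padicValNat 2 (term l m k) + padicValNat 2 (m - k)! + padicValNat 2 (k - l)! =
      m + padicValNat 2 (m + k)! := by
  have hc : (2 * m - 2 * k).choose (m - k) = (m - k).centralBinom := by
    rw [centralBinom_eq_two_mul_choose, Nat.mul_sub]
  have h1 := padicValNat_centralBinom_add_factorial (m - k)
  have h2 := padicValNat_choose_add_factorials (p := 2) (le_add_right m k)
  have h3 := padicValNat_choose_add_factorials (p := 2) hlk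
  rw [Nat.add_sub_cancel_left] at h2
  have hCkl := (choose_pos hlk).ne'
  have hCm := (choose_pos (le_add_right m k)).ne'
  have hCmk := (centralBinom_pos (m - k)).ne'
  rw [term, hc]
  simp (disch := positivity) only [padicValNat.mul, padicValNat.prime_pow]
  omega

theorem padicValNat_term_lt {l m k : ℕ} (hlk : l < k) (hkm : k ≤ m) :
    padicValNat 2 (term l m l) < padicValNat 2 (term l m k) := by
  have hl := padicValNat_term le_rfl (hlk.le.trans hkm)
  have hk := padicValNat_term hlk.le hkm
  have hC := padicValNat_choose_add_factorials (p := 2) (show k - l ≤ m - l by omega)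
  rw [show m - l - (k - l) = m - k by omega] at hC
  have := padicValNat_two_factorial_lt_add_choose hlk hkm
  rw [Nat.sub_self, factorial_zero, padicValNat_one_right] at hl
  omega

theorem padicValRat_eq {l m : ℕ} (h : l ≤ m) :
    padicValRat 2 (A l m) = l + padicValNat 2 (m + l)! - padicValNat 2 (m - l)! := by
  have hsum : padicValNat 2 (∑ k ∈ Icc l m, term l m k) = padicValNat 2 (term l m l) :=
    padicValNat_sum_eq_of_dvd (left_mem_Icc.mpr h) (term_pos le_rfl h).ne' fun k hk hkl => by
      obtain ⟨hlk, hkm⟩ := mem_Icc.mp hk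
      exact (padicValNat_dvd_iff_le (term_pos hlk hkm).ne').mpr
        (padicValNat_term_lt (lt_of_le_of_ne hlk (Ne.symm hkl)) hkm)
  have hl := padicValNat_term le_rfl h
  rw [Nat.sub_self, factorial_zero, padicValNat_one_right] at hl
  have hpos : (∑ k ∈ Icc l m, term l m k) ≠ 0 :=
    (sum_pos (fun k hk => term_pos (mem_Icc.mp hk).1 (mem_Icc.mp hk).2) ⟨l, left_mem_Icc.mpr h⟩).ne'
  have hpow : (2 : ℚ) ^ (m - l) = ((2 ^ (m - l) : ℕ) : ℚ) := by push_cast; rfl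
  rw [eq_sum_term_div, hpow, padicValRat.div (by exact_mod_cast hpos) (by positivity),
    padicValRat.of_nat, padicValRat.of_nat, padicValNat.prime_pow, hsum]
  omega

end A

theorem val_A_diff (l m : ℕ) (h : l ≤ m) :
    padicValRat 2 (A l (m + 1)) - padicValRat 2 (A l m) =
      (padicValNat 2 (m + l + 1) : ℤ) - (padicValNat 2 (m - l + 1) : ℤ) := by
  rw [A.padicValRat_eq h, A.padicValRat_eq (h.trans (le_succ m)), add_right_comm m 1 l,
    show m + 1 - l = m - l + 1 by omega, padicValNat_factorial_succ, padicValNat_factorial_succ]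
  push_cast
  ring
end

section
/- Fix l ≥ 1 and set μ = 1 + ν₂(l). For any k ≥ 0 and any 0 ≤ j ≤ 2^μ − 2, ν₂(A_{l, l + k·2^μ + j+1}) = ν₂(A_{l, l + k·2^μ + j}); that is, ν₂(A_{l,m}) is constant on each block C_{k,l} = {l + k·2^μ + j : 0 ≤ j ≤ 2^μ − 1}. -/
open Finset

/-!
Up to the factor `2^l l! m! / 2^m`, `A l m` is the sum over `k ≤ m` of
`T l m k = 2^k C(2m-2k, m-k) C(m+k, m) C(k, l)`. The ratio `T l m (k+1) / T l m k` provides a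
Zeilberger certificate: summed over `k` it telescopes to the three-term recurrence
`4 (m - l)(m + l + 1) A l m = 2 (2m + 1) A (l+1) m - A (l+2) m`.
Writing `A l m = 2^l (m+l)! / (m-l)! · B l m`, this becomes
`B l m = (2m + 1) B (l+1) m - (m + l + 2)(m - l - 1) B (l+2) m`, and the last coefficient is even,
so induction on `m - l` shows that every `B l m` is an odd integer. Hence
`ν₂(A l m) = l + ν₂((m+l)!) - ν₂((m-l)!)`, and passing from `m` to `m + 1` adds
`ν₂(m + l + 1) - ν₂(m - l + 1)`. In a block both arguments are `j + 1` plus a multiple of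
`2^μ` (as `2^μ ∣ 2l`), and `0 < j + 1 < 2^μ`, so the two valuations agree.
-/

open Nat

theorem cast_choose_succ_right_eq {R : Type*} [Ring R] (n k : ℕ) :
    (n.choose (k + 1) : R) * (k + 1) = n.choose k * ((n : R) - k) := by
  rcases le_or_gt k n with h | h
  · rw [← Nat.cast_sub h]
    exact_mod_cast congrArg (Nat.cast : ℕ → R) (choose_succ_right_eq n k)
  · simp [choose_eq_zero_of_lt h, choose_eq_zero_of_lt (h.trans k.lt_succ_self)]

theorem cast_choose_mul_succ_eq {R : Type*} [Ring R] (n k : ℕ) :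
    (n.choose k : R) * (n + 1) = (n + 1).choose k * ((n : R) + 1 - k) := by
  rcases le_or_gt k (n + 1) with h | h
  · rw [← Nat.cast_add_one, ← Nat.cast_sub h]
    exact_mod_cast congrArg (Nat.cast : ℕ → R) (choose_mul_succ_eq n k)
  · simp [choose_eq_zero_of_lt h, choose_eq_zero_of_lt ((lt_succ_self n).trans h)]

theorem padicValNat_add_of_lt_of_dvd {p n x y : ℕ} [Fact p.Prime] (hx₀ : x ≠ 0)
    (hx : x < p ^ n) (hy : p ^ n ∣ y) : padicValNat p (x + y) = padicValNat p x := by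
  have hvn : padicValNat p x < n :=
    (Nat.pow_lt_pow_iff_right (Fact.out : p.Prime).one_lt).mp
      ((Nat.le_of_dvd (pos_of_ne_zero hx₀) pow_padicValNat_dvd).trans_lt hx)
  have hdvd : ∀ i ≤ n, p ^ i ∣ y := fun i hi => (pow_dvd_pow p hi).trans hy
  apply le_antisymm
  · by_contra! hlt
    have := (padicValNat_dvd_iff_le (by omega)).mpr hlt
    exact pow_succ_padicValNat_not_dvd hx₀ ((Nat.dvd_add_left (hdvd _ hvn)).mp this)
  · exact (padicValNat_dvd_iff_le (by omega)).mp (dvd_add pow_padicValNat_dvd (hdvd _ hvn.le))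

noncomputable def ATerm (l m k : ℕ) : ℚ :=
  (2 : ℚ) ^ k * ((2 * m - 2 * k).choose (m - k)) * ((m + k).choose m) * (k.choose l)

noncomputable def ASum (l m : ℕ) : ℚ := ∑ k ∈ range (m + 1), ATerm l m k

theorem ATerm_succ_left (l m k : ℕ) :
    ATerm (l + 1) m k * (l + 1) = ATerm l m k * ((k : ℚ) - l) := by
  simp only [ATerm, mul_assoc, cast_choose_succ_right_eq]

theorem ATerm_succ_mul (l : ℕ) {m k : ℕ} (hkm : k < m) :
    ATerm l m (k + 1) * (((k : ℚ) + 1 - l) * (2 * m - 2 * k - 1)) =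
      ATerm l m k * (((m : ℚ) - k) * (m + k + 1)) := by
  obtain ⟨b, rfl⟩ : ∃ b, m = k + 1 + b := ⟨m - (k + 1), by omega⟩
  have hcentral : ((b + 1 : ℕ) : ℚ) * (2 * b + 2).choose (b + 1) =
      2 * (2 * b + 1) * (2 * b).choose b := by
    exact_mod_cast succ_mul_centralBinom_succ b
  have hbinom := cast_choose_mul_succ_eq (R := ℚ) (k + 1 + b + k) (k + 1 + b)
  have hl := cast_choose_mul_succ_eq (R := ℚ) k l
  simp only [ATerm, show 2 * (k + 1 + b) - 2 * (k + 1) = 2 * b by omega,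
    show k + 1 + b - (k + 1) = b by omega, show 2 * (k + 1 + b) - 2 * k = 2 * b + 2 by omega,
    show k + 1 + b - k = b + 1 by omega, show k + 1 + b + (k + 1) = k + 1 + b + k + 1 by omega]
  push_cast at hcentral hbinom hl ⊢
  linear_combination
    -(2 ^ k * ((k + 1 + b + k).choose (k + 1 + b) : ℚ) * (2 * k + b + 2) * k.choose l) * hcentral
    - (2 ^ k * 2 * (2 * b + 1) * ((2 * b).choose b : ℚ) * k.choose l) * hbinom
    - (2 ^ (k + 1) * (2 * b + 1) * ((2 * b).choose b : ℚ) *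
        ((k + 1 + b + k + 1).choose (k + 1 + b) : ℚ)) * hl

theorem sum_ATerm_telescope (l m : ℕ) :
    ∑ k ∈ range (m + 1), ATerm l m k * (((k : ℚ) - l) * (2 * m + 1 - 2 * k)) =
      ∑ k ∈ range (m + 1), ATerm l m k * (((m : ℚ) - k) * (m + k + 1)) := by
  have hzero : ATerm l m 0 * ((0 : ℚ) - l) = 0 := by
    cases l <;> simp [ATerm]
  rw [sum_range_succ', sum_range_succ]
  push_cast
  simp only [sub_self, zero_mul, mul_zero, add_zero]
  rw [← mul_assoc, hzero, zero_mul, add_zero]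
  refine sum_congr rfl fun k hk => ?_
  rw [← ATerm_succ_mul l (mem_range.mp hk)]
  ring

theorem ASum_recurrence (l m : ℕ) :
    ((m : ℚ) - l) * (m + l + 1) * ASum l m =
      (2 * m + 1) * (l + 1) * ASum (l + 1) m - (l + 1) * (l + 2) * ASum (l + 2) m := by
  have hpoint : ∀ k, ((m : ℚ) - l) * (m + l + 1) * ATerm l m k -
      ((2 * m + 1) * (l + 1) * ATerm (l + 1) m k - (l + 1) * (l + 2) * ATerm (l + 2) m k) =
      ATerm l m k * (((m : ℚ) - k) * (m + k + 1)) -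
        ATerm l m k * (((k : ℚ) - l) * (2 * m + 1 - 2 * k)) := by
    intro k
    have h₁ := ATerm_succ_left l m k
    have h₂ := ATerm_succ_left (l + 1) m k
    push_cast at h₂
    linear_combination (↑l + 1) * h₂ - (2 * (m : ℚ) + 2 - k + l) * h₁
  simp only [ASum, mul_sum]
  rw [← sub_eq_zero, ← sum_sub_distrib, ← sum_sub_distrib, sum_congr rfl fun k _ => hpoint k,
    sum_sub_distrib, sum_ATerm_telescope, sub_self]

theorem A_of_lt {l m : ℕ} (h : m < l) : A l m = 0 := by
  simp [A, Icc_eq_empty_of_lt h]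

theorem A_self (l : ℕ) : A l l = 2 ^ l * (2 * l)! := by
  have h := choose_mul_factorial_mul_factorial (show l ≤ 2 * l by omega)
  rw [show 2 * l - l = l by omega] at h
  simp only [A, Icc_self, sum_singleton, Nat.sub_self, choose_self, ← two_mul, ← h]
  push_cast
  ring

theorem A_eq_ASum (l m : ℕ) : A l m = 2 ^ l * l ! * m ! / 2 ^ m * ASum l m := by
  have hsum : ∑ k ∈ Icc l m, ATerm l m k = ASum l m := by
    refine sum_subset (fun k hk => mem_range.mpr (lt_succ_of_le (mem_Icc.mp hk).2))
      fun k hk hk' => ?_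
    have hkl : k < l := by simp only [mem_range, mem_Icc] at hk hk'; omega
    simp [ATerm, choose_eq_zero_of_lt hkl]
  rcases le_or_gt l m with h | h
  · rw [A, ← hsum, pow_sub₀ _ two_ne_zero h]
    simp only [ATerm]
    push_cast
    field_simp
  · rw [A_of_lt h, ← hsum, Icc_eq_empty_of_lt h, sum_empty, mul_zero]

theorem A_recurrence (l m : ℕ) :
    4 * ((m : ℚ) - l) * (m + l + 1) * A l m = 2 * (2 * m + 1) * A (l + 1) m - A (l + 2) m := by
  simp only [A_eq_ASum, factorial_succ, pow_succ]
  push_cast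
  linear_combination (4 * 2 ^ l * l ! * m ! / 2 ^ m : ℚ) * ASum_recurrence l m

theorem exists_odd_A_mul_factorial (d : ℕ) :
    ∀ l, ∃ t : ℤ, Odd t ∧ A l (l + d) * d ! = 2 ^ l * (2 * l + d)! * t := by
  induction d using Nat.twoStepInduction with
  | zero => exact fun l => ⟨1, odd_one, by simp [A_self]⟩
  | one =>
    intro l
    have h := A_recurrence l (l + 1)
    rw [A_of_lt (show l + 1 < l + 2 by omega), A_self,
      show 2 * (l + 1) = 2 * l + 1 + 1 by ring] at h
    refine ⟨2 * l + 3, ⟨l + 1, by ring⟩, ?_⟩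
    simp only [factorial_succ, factorial_zero] at h ⊢
    push_cast at h ⊢
    apply mul_left_cancel₀ (show 8 * ((l : ℚ) + 1) ≠ 0 by positivity)
    linear_combination h
  | more d ih₀ ih₁ =>
    intro l
    obtain ⟨t₁, ht₁, h₁⟩ := ih₁ (l + 1)
    obtain ⟨t₂, ht₂, h₂⟩ := ih₀ (l + 2)
    have h := A_recurrence l (l + (d + 2))
    rw [show l + 1 + (d + 1) = l + (d + 2) by omega,
      show 2 * (l + 1) + (d + 1) = 2 * l + (d + 2) + 1 by omega] at h₁
    rw [show l + 2 + d = l + (d + 2) by omega,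
      show 2 * (l + 2) + d = 2 * l + (d + 2) + 1 + 1 by omega] at h₂
    refine ⟨(2 * l + 2 * d + 5) * t₁ - (d + 1) * (2 * l + d + 4) * t₂, ?_, ?_⟩
    · have hodd : Odd (2 * l + 2 * d + 5 : ℤ) := ⟨l + d + 2, by ring⟩
      have heven : Even ((d + 1) * (2 * l + d + 4) : ℤ) := by
        rw [show ((d : ℤ) + 1) * (2 * l + d + 4) =
          (d + 1) * (d + 1 + 1) + 2 * ((l + 1) * (d + 1)) by ring]
        exact (Int.even_mul_succ_self _).add (even_two_mul _)
      exact (hodd.mul ht₁).sub_even (heven.mul_right t₂)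
    · simp only [factorial_succ] at h₁ h₂ ⊢
      push_cast at h h₁ h₂ ⊢
      apply mul_left_cancel₀ (show 4 * (2 * (l : ℚ) + d + 3) ≠ 0 by positivity)
      linear_combination ((d : ℚ) + 1) * d ! * h + 2 * (2 * (l : ℚ) + 2 * d + 5) * h₁
        - ((d : ℚ) + 1) * h₂

theorem padicValRat_A {l m : ℕ} (h : l ≤ m) :
    padicValRat 2 (A l m) = l + padicValNat 2 (m + l)! - padicValNat 2 (m - l)! := by
  obtain ⟨t, ht, hA⟩ := exists_odd_A_mul_factorial (m - l) l
  rw [Nat.add_sub_cancel' h, show 2 * l + (m - l) = m + l by omega] at hA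
  have ht₀ : (t : ℚ) ≠ 0 := Int.cast_ne_zero.mpr (by rintro rfl; simp at ht)
  have hvt : padicValRat 2 t = 0 := by
    rw [padicValRat.of_int,
      padicValInt.eq_zero_of_not_dvd (by simpa [← even_iff_two_dvd] using ht), Nat.cast_zero]
  have hA₀ : A l m ≠ 0 := by
    rintro h0
    rw [h0, zero_mul] at hA
    exact (mul_ne_zero (mul_ne_zero (by positivity) (by positivity)) ht₀) hA.symm
  have hv := congrArg (padicValRat 2) hA
  rw [padicValRat.mul hA₀ (by positivity), padicValRat.mul (by positivity) ht₀,
    padicValRat.mul (by positivity) (by positivity), padicValRat.pow, hvt, padicValRat.of_nat,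
    padicValRat.of_nat] at hv
  have hv₂ : padicValRat 2 2 = 1 := by simpa using padicValRat.self (p := 2) one_lt_two
  rw [hv₂] at hv
  linarith

theorem padicValRat_A_succ {l m : ℕ} (h : l ≤ m) :
    padicValRat 2 (A l (m + 1)) =
      padicValRat 2 (A l m) + padicValNat 2 (m + l + 1) - padicValNat 2 (m - l + 1) := by
  rw [padicValRat_A h, padicValRat_A (h.trans m.le_succ), show m + 1 + l = m + l + 1 by omega,
    show m + 1 - l = m - l + 1 by omega, factorial_succ, factorial_succ,
    padicValNat.mul (succ_ne_zero _) (factorial_ne_zero _),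
    padicValNat.mul (succ_ne_zero _) (factorial_ne_zero _)]
  push_cast
  ring

theorem val_A_block_const_general (l : ℕ) (k j : ℕ)
    (hj : j ≤ 2 ^ (1 + padicValNat 2 l) - 2) :
    padicValRat 2 (A l (l + k * 2 ^ (1 + padicValNat 2 l) + j + 1)) =
      padicValRat 2 (A l (l + k * 2 ^ (1 + padicValNat 2 l) + j)) := by
  set N := 2 ^ (1 + padicValNat 2 l) with hN_def
  have hN : N ∣ 2 * l := by
    rw [hN_def, pow_add, pow_one]
    exact mul_dvd_mul_left 2 pow_padicValNat_dvd
  have hj₁ : j + 1 < N := by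
    have : 2 ≤ N := le_self_pow₀ one_le_two (by omega)
    omega
  set K := k * N
  have hK : N ∣ K := dvd_mul_left N k
  have hplus : padicValNat 2 (l + K + j + l + 1) = padicValNat 2 (j + 1) := by
    rw [show l + K + j + l + 1 = j + 1 + (K + 2 * l) by ring]
    exact padicValNat_add_of_lt_of_dvd (succ_ne_zero j) hj₁ (dvd_add hK hN)
  have hminus : padicValNat 2 (l + K + j - l + 1) = padicValNat 2 (j + 1) := by
    rw [show l + K + j - l + 1 = j + 1 + K by omega]
    exact padicValNat_add_of_lt_of_dvd (succ_ne_zero j) hj₁ hK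
  rw [padicValRat_A_succ (by omega), hplus, hminus, add_sub_cancel_right]

theorem val_A_block_const (l : ℕ) (h : 1 ≤ l) (k j : ℕ)
    (hj : j ≤ 2 ^ (1 + padicValNat 2 l) - 2) :
    padicValRat 2 (A l (l + k * 2 ^ (1 + padicValNat 2 l) + j + 1)) =
      padicValRat 2 (A l (l + k * 2 ^ (1 + padicValNat 2 l) + j)) :=
  val_A_block_const_general l k j hj
end
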